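/- arXiv:math/9604204 — 3 statements merged into one kernel-verified Lean document; each statement's English description precedes it below -/
import Mathlib

section
/- Let δ ≥ 2 be an integer and let P : ℂ² → ℂ² be the map P(z,w) = (z^δ, w^δ), whose k-th iterate is P_k(z,w) = (z^{δ^k}, w^{δ^k}). Then the functions f_k(z,w) = δ^{-k} · log(1 + |z|^{2δ^k} + |w|^{2δ^k}) converge uniformly on all of ℂ² to the function G(z,w) = max(log⁺ |z|², log⁺ |w|²) as k → ∞. -/
/-!
With `a = ‖z‖²`, `b = ‖w‖²`, `n = δ^k` and `M = max 1 (max a b)`, one has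
`M^n ≤ 1 + a^n + b^n ≤ 3 M^n`, so `n⁻¹ log (1 + a^n + b^n)` differs from `log M = G(z,w)` by
at most `log 3 / n`, a bound independent of the point that tends to `0`.
-/

/-- `log⁺ r = max (log r) 0`. -/
noncomputable def logPlus (r : ℝ) : ℝ := max (Real.log r) 0

open Real Filter Topology

lemma logPlus_eq_posLog (r : ℝ) : logPlus r = log⁺ r := max_comm _ _

lemma max_posLog_posLog {a b : ℝ} (ha : 0 ≤ a) (hb : 0 ≤ b) :
    max (log⁺ a) (log⁺ b) = log⁺ (max a b) :=
  (MonotoneOn.map_max (s := Set.Ici 0) (fun _ hx _ _ hxy => posLog_le_posLog hx hxy) ha hb).symm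

lemma TendstoUniformly.of_dist_le {ι β α : Type*} [PseudoMetricSpace α] {F : ι → β → α}
    {f : β → α} {p : Filter ι} {u : ι → ℝ} (hu : Tendsto u p (𝓝 0))
    (h : ∀ᶠ i in p, ∀ x, dist (f x) (F i x) ≤ u i) : TendstoUniformly F f p := by
  rw [Metric.tendstoUniformly_iff]
  intro ε hε
  filter_upwards [h, hu.eventually (gt_mem_nhds hε)] with i hi hui x using (hi x).trans_lt hui

lemma abs_log_sub_log_le_log_of_le_mul {x y C : ℝ} (hy : 0 < y) (hyx : y ≤ x)
    (hxC : x ≤ C * y) : |log x - log y| ≤ log C := by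
  have hC : 0 < C := pos_of_mul_pos_left (hy.trans_le (hyx.trans hxC)) hy.le
  rw [abs_of_nonneg (sub_nonneg.2 (log_le_log hy hyx)), sub_le_iff_le_add, ← log_mul hC.ne' hy.ne']
  exact log_le_log (hy.trans_le hyx) hxC

section TwoPowers

variable {a b : ℝ} (ha : 0 ≤ a) (hb : 0 ≤ b) (n : ℕ)
include ha hb

lemma pow_max_one_max_le_one_add_pow_add_pow :
    max 1 (max a b) ^ n ≤ 1 + a ^ n + b ^ n := by
  have han := pow_nonneg ha n
  have hbn := pow_nonneg hb n
  rcases max_choice 1 (max a b) with h | h <;> rw [h]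
  · linarith [one_pow (M := ℝ) n]
  · rcases max_choice a b with h' | h' <;> rw [h'] <;> linarith

lemma one_add_pow_add_pow_le_three_mul_pow_max_one_max :
    1 + a ^ n + b ^ n ≤ 3 * max 1 (max a b) ^ n := by
  have h1 : (1 : ℝ) ≤ max 1 (max a b) ^ n := one_le_pow₀ (le_max_left _ _)
  have hA : a ^ n ≤ max 1 (max a b) ^ n :=
    pow_le_pow_left₀ ha ((le_max_left a b).trans (le_max_right _ _)) n
  have hB : b ^ n ≤ max 1 (max a b) ^ n :=
    pow_le_pow_left₀ hb ((le_max_right a b).trans (le_max_right _ _)) n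
  linarith

lemma abs_inv_mul_log_one_add_pow_add_pow_sub_posLog_le (hn : n ≠ 0) :
    |(n : ℝ)⁻¹ * log (1 + a ^ n + b ^ n) - log⁺ (max a b)| ≤ log 3 / n := by
  have hn' : (0 : ℝ) < n := Nat.cast_pos.2 (Nat.pos_of_ne_zero hn)
  have hM : 0 < max 1 (max a b) := one_pos.trans_le (le_max_left _ _)
  have hlog := abs_log_sub_log_le_log_of_le_mul (pow_pos hM n)
    (pow_max_one_max_le_one_add_pow_add_pow ha hb n)
    (one_add_pow_add_pow_le_three_mul_pow_max_one_max ha hb n)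
  rw [log_pow] at hlog
  rw [posLog_eq_log_max_one (le_max_of_le_left ha), le_div_iff₀ hn', ← abs_of_pos hn', ← abs_mul,
    abs_of_pos hn']
  have hscale : ((n : ℝ)⁻¹ * log (1 + a ^ n + b ^ n) - log (max 1 (max a b))) * n =
      log (1 + a ^ n + b ^ n) - n * log (max 1 (max a b)) := by
    field_simp
  rwa [hscale]

end TwoPowers

/-- For `P(z,w) = (z^δ, w^δ)` with `δ ≥ 2`, the functions
`f_k(z,w) = δ^{-k} · log(1 + |z|^{2δ^k} + |w|^{2δ^k})` converge uniformly on all of `ℂ²`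
to `G(z,w) = max(log⁺ |z|², log⁺ |w|²)`. -/
theorem stmt0 (δ : ℕ) (hδ : 2 ≤ δ) :
    TendstoUniformly
      (fun (k : ℕ) (p : ℂ × ℂ) =>
        ((δ : ℝ) ^ k)⁻¹ *
          Real.log (1 + ‖p.1‖ ^ (2 * δ ^ k) + ‖p.2‖ ^ (2 * δ ^ k)))
      (fun p : ℂ × ℂ =>
        max (logPlus (‖p.1‖ ^ 2)) (logPlus (‖p.2‖ ^ 2)))
      Filter.atTop := by
  have hδ1 : (1 : ℝ) < δ := by exact_mod_cast hδ
  have hbound : Tendsto (fun k : ℕ => log 3 / ((δ ^ k : ℕ) : ℝ)) atTop (𝓝 0) := by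
    push_cast
    exact tendsto_const_nhds.div_atTop (tendsto_pow_atTop_atTop_of_one_lt hδ1)
  refine TendstoUniformly.of_dist_le hbound (Eventually.of_forall fun k p => ?_)
  have key := abs_inv_mul_log_one_add_pow_add_pow_sub_posLog_le (sq_nonneg ‖p.1‖)
    (sq_nonneg ‖p.2‖) (δ ^ k) (pow_ne_zero k (by omega))
  simp only [← pow_mul, Nat.cast_pow] at key
  rw [dist_comm, Real.dist_eq, logPlus_eq_posLog, logPlus_eq_posLog,
    max_posLog_posLog (sq_nonneg _) (sq_nonneg _)]
  exact_mod_cast key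
end

section
/- Fix a, b ∈ ℂ with a ≠ 0 and b ≠ 0, and let (d_k) and (e_k) be sequences of positive integers tending to ∞. For each k, let ν_k be the uniform probability measure on the d_k·e_k points of the set {(z,w) ∈ ℂ² : z^{d_k} = a and w^{e_k} = b}. Then ν_k converges weakly, as k → ∞, to the Haar probability measure on the torus T² = S¹ × S¹ ⊂ ℂ². -/
open MeasureTheory

/-- The Haar probability measure on the unit circle `S¹ ⊂ ℂ`, realized as the
pushforward of Lebesgue measure on `(0,1]` under `t ↦ exp(2πit)`. -/
noncomputable def circleHaar : Measure ℂ :=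
  Measure.map (fun t : ℝ => Complex.exp (2 * Real.pi * Complex.I * t))
    (volume.restrict (Set.Ioc (0 : ℝ) 1))

/-- The Haar probability measure on the torus `T² = S¹ × S¹ ⊂ ℂ²`. -/
noncomputable def torusHaar : Measure (ℂ × ℂ) := circleHaar.prod circleHaar

/-- The uniform probability measure on the `d·e` points of
`{(z,w) : z^d = a ∧ w^e = b}`. -/
noncomputable def fiberMeasure (d e : ℕ) (a b : ℂ) : Measure (ℂ × ℂ) :=
  ((d : ENNReal) * (e : ENNReal))⁻¹ •
    (((Polynomial.nthRoots d a).bind fun z =>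
        (Polynomial.nthRoots e b).map fun w => ((z, w) : ℂ × ℂ)).map Measure.dirac).sum

/-! The fiber measure is the product of the uniform measures on the `d`-th roots of `a` and on
the `e`-th roots of `b`, and the product of probability measures is weakly continuous in the
factors, so it suffices to treat one circle. The `n`-th roots of `a` are
`exp(2πij/n) · exp(log a / n)`, `j < n`, where `exp(log a / n) → 1`; so integrating a bounded
continuous `f` against their uniform measure is, up to the uniform continuity of `f` on a
compact ball, a Riemann sum for `∫₀¹ f(exp(2πit)) dt`. -/

open Filter Topology MeasureTheory
open scoped Real ENNReal BoundedContinuousFunction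

namespace MeasureTheory.Measure

variable {α β : Type*} [MeasurableSpace α] [MeasurableSpace β]

instance isFiniteMeasure_sum_map_dirac (s : Multiset α) :
    IsFiniteMeasure (s.map dirac).sum := by
  induction s using Multiset.induction_on with
  | empty => simp only [Multiset.map_zero, Multiset.sum_zero]; infer_instance
  | cons x s _ => simp only [Multiset.map_cons, Multiset.sum_cons]; infer_instance

lemma sum_map_dirac_apply_univ (s : Multiset α) :
    (s.map dirac).sum Set.univ = Multiset.card s := by
  induction s using Multiset.induction_on with
  | empty => simp
  | cons x s ih => simp [ih, add_comm]

lemma dirac_prod_sum_map_dirac (x : α) (t : Multiset β) :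
    (dirac x).prod (t.map dirac).sum = ((t.map (Prod.mk x)).map dirac).sum := by
  induction t using Multiset.induction_on with
  | empty => simp
  | cons y t ih => simp [prod_add, ih, dirac_prod_dirac]

lemma sum_map_dirac_prod_sum_map_dirac (s : Multiset α) (t : Multiset β) :
    (s.map dirac).sum.prod (t.map dirac).sum = ((s ×ˢ t).map dirac).sum := by
  induction s using Multiset.induction_on with
  | empty => simp
  | cons x s ih => simp [add_prod, ih, dirac_prod_sum_map_dirac, Multiset.cons_product]

lemma integrable_sum_map_dirac [MeasurableSingletonClass α] {E : Type*} [NormedAddCommGroup E]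
    (s : Multiset α) (f : α → E) : Integrable f (s.map dirac).sum := by
  induction s using Multiset.induction_on with
  | empty => simp
  | cons x s ih =>
    simp only [Multiset.map_cons, Multiset.sum_cons]
    exact (integrable_dirac enorm_lt_top).add_measure ih

lemma integral_sum_map_dirac [MeasurableSingletonClass α] {E : Type*} [NormedAddCommGroup E]
    [NormedSpace ℝ E] [CompleteSpace E] (s : Multiset α) (f : α → E) :
    ∫ x, f x ∂(s.map dirac).sum = (s.map f).sum := by
  induction s using Multiset.induction_on with
  | empty => simp
  | cons x s ih =>
    simp only [Multiset.map_cons, Multiset.sum_cons]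
    rw [integral_add_measure (integrable_dirac enorm_lt_top) (integrable_sum_map_dirac s f),
      integral_dirac, ih]

end MeasureTheory.Measure

noncomputable def circleParam (t : ℝ) : ℂ := Complex.exp (2 * π * Complex.I * t)

noncomputable def rootsMeasure (n : ℕ) (a : ℂ) : Measure ℂ :=
  (n : ℝ≥0∞)⁻¹ • ((Polynomial.nthRoots n a).map Measure.dirac).sum

lemma nthRoots_eq_map_range {n : ℕ} (hn : n ≠ 0) {a : ℂ} (ha : a ≠ 0) :
    Polynomial.nthRoots n a = (Multiset.range n).map
      fun j : ℕ => circleParam (j / n) * Complex.exp (Complex.log a / n) := by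
  have hpow : Complex.exp (Complex.log a / n) ^ n = a := by
    rw [← Complex.exp_nat_mul, mul_div_cancel₀ _ (Nat.cast_ne_zero.2 hn), Complex.exp_log ha]
  rw [(Complex.isPrimitiveRoot_exp n hn).nthRoots_eq hpow]
  refine Multiset.map_congr rfl fun j _ => ?_
  rw [← Complex.exp_nat_mul, circleParam]
  push_cast
  ring_nf

lemma fiberMeasure_eq_prod (d e : ℕ) (a b : ℂ) :
    fiberMeasure d e a b = (rootsMeasure d a).prod (rootsMeasure e b) := by
  rw [rootsMeasure, rootsMeasure, Measure.prod_smul_left, Measure.prod_smul_right,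
    Measure.sum_map_dirac_prod_sum_map_dirac, smul_smul,
    ← ENNReal.mul_inv (.inr (ENNReal.natCast_ne_top e)) (.inl (ENNReal.natCast_ne_top d))]
  rfl

lemma isProbabilityMeasure_rootsMeasure {n : ℕ} (hn : n ≠ 0) {a : ℂ} (ha : a ≠ 0) :
    IsProbabilityMeasure (rootsMeasure n a) := by
  constructor
  rw [rootsMeasure, Measure.smul_apply, Measure.sum_map_dirac_apply_univ,
    nthRoots_eq_map_range hn ha, Multiset.card_map, Multiset.card_range, smul_eq_mul,
    ENNReal.inv_mul_cancel (Nat.cast_ne_zero.2 hn) (ENNReal.natCast_ne_top n)]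

lemma integral_rootsMeasure {E : Type*} [NormedAddCommGroup E] [NormedSpace ℝ E]
    [CompleteSpace E] {n : ℕ} (hn : n ≠ 0) {a : ℂ} (ha : a ≠ 0) (f : ℂ → E) :
    ∫ z, f z ∂rootsMeasure n a =
      (n : ℝ)⁻¹ • ∑ j ∈ Finset.range n,
        f (circleParam (j / n) * Complex.exp (Complex.log a / n)) := by
  rw [rootsMeasure, integral_smul_measure, Measure.integral_sum_map_dirac,
    nthRoots_eq_map_range hn ha, Multiset.map_map, ENNReal.toReal_inv, ENNReal.toReal_natCast]
  rfl

lemma circleParam_eq_circleMap (t : ℝ) : circleParam t = circleMap 0 1 (2 * π * t) := by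
  rw [circleParam, circleMap_zero]
  push_cast
  ring_nf

lemma continuous_circleParam : Continuous circleParam := by
  unfold circleParam
  fun_prop

lemma norm_circleParam (t : ℝ) : ‖circleParam t‖ = 1 := by
  simp [circleParam_eq_circleMap]

lemma dist_circleParam_le (s t : ℝ) :
    dist (circleParam s) (circleParam t) ≤ 2 * π * |s - t| := by
  have := (lipschitzWith_circleMap 0 1).dist_le_mul (2 * π * s) (2 * π * t)
  simpa [circleParam_eq_circleMap, Real.dist_eq, ← mul_sub, abs_mul, abs_of_pos Real.pi_pos]
    using this

instance isProbabilityMeasure_circleHaar : IsProbabilityMeasure circleHaar := by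
  have : IsProbabilityMeasure (volume.restrict (Set.Ioc (0 : ℝ) 1)) := ⟨by simp⟩
  exact Measure.isProbabilityMeasure_map continuous_circleParam.aemeasurable

lemma integral_circleHaar {E : Type*} [NormedAddCommGroup E] [NormedSpace ℝ E]
    {f : ℂ → E} (hf : AEStronglyMeasurable f circleHaar) :
    ∫ z, f z ∂circleHaar = ∫ t in 0..1, f (circleParam t) := by
  rw [intervalIntegral.integral_of_le zero_le_one]
  exact integral_map continuous_circleParam.aemeasurable hf

lemma abs_sum_div_sub_integral_le {g : ℝ → ℝ} (hg : Continuous g) {n : ℕ} (hn : n ≠ 0)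
    {y : ℕ → ℝ} {ε : ℝ}
    (hy : ∀ j < n, ∀ t ∈ Set.Icc ((j : ℝ) / n) ((j + 1) / n), |y j - g t| ≤ ε) :
    |(n : ℝ)⁻¹ * ∑ j ∈ Finset.range n, y j - ∫ t in 0..1, g t| ≤ ε := by
  have hn' : (0 : ℝ) < n := Nat.cast_pos.2 (Nat.pos_of_ne_zero hn)
  have hpiece : ∀ j ∈ Finset.range n,
      (n : ℝ)⁻¹ * y j - ∫ t in (j / n : ℝ)..((j + 1) / n), g t =
        ∫ t in (j / n : ℝ)..((j + 1) / n), (y j - g t) := by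
    intro j _
    rw [intervalIntegral.integral_sub intervalIntegrable_const (hg.intervalIntegrable _ _),
      intervalIntegral.integral_const, smul_eq_mul]
    ring
  have hsplit : ∫ t in (0 : ℝ)..1, g t =
      ∑ j ∈ Finset.range n, ∫ t in (j / n : ℝ)..((j + 1) / n), g t := by
    have := intervalIntegral.sum_integral_adjacent_intervals (a := fun j : ℕ => (j / n : ℝ))
      (n := n) (μ := volume) (fun j _ => hg.intervalIntegrable _ _)
    simp only [Nat.cast_add, Nat.cast_one, Nat.cast_zero, zero_div, div_self hn'.ne'] at this
    exact this.symm
  have hbound : ∀ j ∈ Finset.range n,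
      |∫ t in (j / n : ℝ)..((j + 1) / n), (y j - g t)| ≤ ε * (n : ℝ)⁻¹ := by
    intro j hj
    have hle : (j / n : ℝ) ≤ (j + 1) / n := by gcongr; linarith
    have := intervalIntegral.norm_integral_le_of_norm_le_const (C := ε)
      (f := fun t => y j - g t) (a := (j / n : ℝ)) (b := (j + 1) / n) fun t ht =>
        hy j (Finset.mem_range.1 hj) t (Set.Ioc_subset_Icc_self (Set.uIoc_of_le hle ▸ ht))
    rwa [abs_of_nonneg (sub_nonneg.2 hle), ← sub_div, add_sub_cancel_left, one_div] at this
  calc |(n : ℝ)⁻¹ * ∑ j ∈ Finset.range n, y j - ∫ t in 0..1, g t|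
      = |∑ j ∈ Finset.range n, ∫ t in (j / n : ℝ)..((j + 1) / n), (y j - g t)| := by
        rw [hsplit, Finset.mul_sum, ← Finset.sum_sub_distrib, Finset.sum_congr rfl hpiece]
    _ ≤ ∑ j ∈ Finset.range n, ε * (n : ℝ)⁻¹ :=
        (Finset.abs_sum_le_sum_abs _ _).trans (Finset.sum_le_sum hbound)
    _ = ε := by
        rw [Finset.sum_const, Finset.card_range, nsmul_eq_mul]
        field_simp

lemma dist_circleParam_mul_le (s t : ℝ) (c : ℂ) :
    dist (circleParam s * c) (circleParam t) ≤ 2 * π * |s - t| + ‖c - 1‖ := by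
  calc dist (circleParam s * c) (circleParam t)
      ≤ dist (circleParam s * c) (circleParam s) + dist (circleParam s) (circleParam t) :=
        dist_triangle _ _ _
    _ = ‖c - 1‖ + dist (circleParam s) (circleParam t) := by
        rw [dist_eq_norm, ← mul_sub_one, norm_mul, norm_circleParam, one_mul]
    _ ≤ 2 * π * |s - t| + ‖c - 1‖ := by linarith [dist_circleParam_le s t]

lemma tendsto_integral_rootsMeasure {ι : Type*} {l : Filter ι} {a : ℂ} (ha : a ≠ 0)
    {d : ι → ℕ} (hd : Tendsto d l atTop) (f : ℂ →ᵇ ℝ) :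
    Tendsto (fun i => ∫ z, f z ∂rootsMeasure (d i) a) l (𝓝 (∫ z, f z ∂circleHaar)) := by
  rw [integral_circleHaar f.continuous.aestronglyMeasurable, Metric.tendsto_nhds]
  intro ε hε
  obtain ⟨δ, hδ, hfδ⟩ := Metric.uniformContinuousOn_iff.1
    ((isCompact_closedBall (0 : ℂ) 2).uniformContinuousOn_of_continuous
      f.continuous.continuousOn) (ε / 2) (half_pos hε)
  have hmesh : Tendsto (fun n : ℕ => 2 * π / n + ‖Complex.exp (Complex.log a / n) - 1‖)
      atTop (𝓝 0) := by
    have hroot : Tendsto (fun n : ℕ => Complex.exp (Complex.log a / n)) atTop (𝓝 1) := by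
      simpa [Function.comp_def] using (Complex.continuous_exp.tendsto 0).comp
        (tendsto_const_div_atTop_nhds_zero_nat (Complex.log a))
    simpa using (tendsto_const_div_atTop_nhds_zero_nat (2 * π)).add (hroot.sub_const 1).norm
  filter_upwards [hd.eventually_ne_atTop 0,
    (hmesh.comp hd).eventually (gt_mem_nhds (lt_min hδ one_pos))] with i hn hmesh_lt
  set n := d i
  set c := Complex.exp (Complex.log a / n)
  have hclose : ∀ j : ℕ, ∀ t ∈ Set.Icc ((j : ℝ) / n) ((j + 1) / n),
      dist (circleParam (j / n) * c) (circleParam t) < min δ 1 := by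
    intro j t ht
    have hjt : |(j / n : ℝ) - t| ≤ 1 / n := by
      rw [abs_sub_comm, abs_of_nonneg (sub_nonneg.2 ht.1)]
      linarith [ht.2, add_div (j : ℝ) 1 n]
    calc dist (circleParam (j / n) * c) (circleParam t)
        ≤ 2 * π * |(j / n : ℝ) - t| + ‖c - 1‖ :=
          dist_circleParam_mul_le _ _ _
      _ ≤ 2 * π * (1 / n) + ‖c - 1‖ := by gcongr
      _ = 2 * π / n + ‖c - 1‖ := by rw [mul_one_div]
      _ < min δ 1 := hmesh_lt
  rw [Real.dist_eq, integral_rootsMeasure hn ha, smul_eq_mul]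
  refine (abs_sum_div_sub_integral_le (f.continuous.comp continuous_circleParam) hn
    fun j _ t ht => ?_).trans_lt (half_lt_self hε)
  have hdist := hclose j t ht
  have hmem_circle : circleParam t ∈ Metric.closedBall 0 2 := by
    simp [norm_circleParam]
  have hmem_root : circleParam (j / n) * c ∈ Metric.closedBall 0 2 := by
    have := dist_triangle (circleParam (j / n) * c) (circleParam t) 0
    simp only [Metric.mem_closedBall, dist_zero_right, norm_circleParam] at hmem_circle this ⊢
    linarith [min_le_right δ 1]
  exact (hfδ _ hmem_root _ hmem_circle (hdist.trans_le (min_le_left _ _))).le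

/-- For fixed `a, b ≠ 0` and sequences of positive integers `d_k, e_k → ∞`, the uniform
probability measures on `{(z,w) : z^{d_k} = a, w^{e_k} = b}` converge weakly to the Haar
probability measure on the torus `T² ⊂ ℂ²`. -/
theorem stmt5 (a b : ℂ) (ha : a ≠ 0) (hb : b ≠ 0) (d e : ℕ → ℕ)
    (hd1 : ∀ k, 1 ≤ d k) (he1 : ∀ k, 1 ≤ e k)
    (hd : Filter.Tendsto d Filter.atTop Filter.atTop)
    (he : Filter.Tendsto e Filter.atTop Filter.atTop) :
    ∀ f : BoundedContinuousFunction (ℂ × ℂ) ℝ,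
      Filter.Tendsto (fun k : ℕ => ∫ p, f p ∂(fiberMeasure (d k) (e k) a b))
        Filter.atTop (nhds (∫ p, f p ∂torusHaar)) := by
  let haar : ProbabilityMeasure ℂ := ⟨circleHaar, inferInstance⟩
  let μ : ℕ → ProbabilityMeasure ℂ := fun k =>
    ⟨rootsMeasure (d k) a,
      isProbabilityMeasure_rootsMeasure (Nat.one_le_iff_ne_zero.1 (hd1 k)) ha⟩
  let ν : ℕ → ProbabilityMeasure ℂ := fun k =>
    ⟨rootsMeasure (e k) b,
      isProbabilityMeasure_rootsMeasure (Nat.one_le_iff_ne_zero.1 (he1 k)) hb⟩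
  have hμ : Tendsto μ atTop (𝓝 haar) :=
    ProbabilityMeasure.tendsto_iff_forall_integral_tendsto.2 (tendsto_integral_rootsMeasure ha hd)
  have hν : Tendsto ν atTop (𝓝 haar) :=
    ProbabilityMeasure.tendsto_iff_forall_integral_tendsto.2 (tendsto_integral_rootsMeasure hb he)
  have hprod : Tendsto (fun k => (μ k).prod (ν k)) atTop (𝓝 (haar.prod haar)) :=
    (ProbabilityMeasure.continuous_prod.tendsto (haar, haar)).comp (hμ.prodMk_nhds hν)
  simp only [fiberMeasure_eq_prod]
  exact ProbabilityMeasure.tendsto_iff_forall_integral_tendsto.1 hprod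
end

section
/- Let P : ℂ² → ℂ² be the map P(z,w) = (z², w³), whose k-th iterate is P_k(z,w) = (z^{2^k}, w^{3^k}). Then the functions f_k(z,w) = 3^{-k} · log(1 + |z|^{2·2^k} + |w|^{2·3^k}) converge to G(z,w) = log⁺ |w|² uniformly on every compact subset of ℂ² as k → ∞. -/
/-!
Write `T = max (|w|²) 1`. Every summand of `1 + |z|^{2·2^k} + |w|^{2·3^k}` lies between
`0` and `M^{2·2^k} T^{3^k}`, where `M ≥ 1` bounds `|z|` on the compact set, and the sum is at
least `T^{3^k}`. Taking `3^{-k} log` gives `0 ≤ f_k - log T ≤ 3^{-k} (log 3 + 2·2^k log M)`,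
and `log T = G`, so the error tends to `0` uniformly because `2^k / 3^k → 0`.
-/

open Filter Topology

lemma logPlus_eq_log_max_one {r : ℝ} (hr : 0 ≤ r) : logPlus r = Real.log (max r 1) := by
  rcases le_total r 1 with h | h
  · rw [logPlus, max_eq_right (Real.log_nonpos hr h), max_eq_right h, Real.log_one]
  · rw [logPlus, max_eq_left (Real.log_nonneg h), max_eq_left h]

lemma tendstoUniformlyOn_of_dist_le {ι α β : Type*} [PseudoMetricSpace β] {l : Filter ι}
    {F : ι → α → β} {f : α → β} {s : Set α} {δ : ι → ℝ} (hδ : Tendsto δ l (𝓝 0))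
    (h : ∀ i, ∀ x ∈ s, dist (f x) (F i x) ≤ δ i) : TendstoUniformlyOn F f l s := by
  rw [Metric.tendstoUniformlyOn_iff]
  intro ε hε
  filter_upwards [hδ.eventually (gt_mem_nhds hε)] with i hi x hx
  exact (h i x hx).trans_lt hi

section Estimates

variable {A B : ℝ}

lemma max_one_pow_le_one_add_add_pow (hA : 0 ≤ A) (hB : 0 ≤ B) (n : ℕ) : max B 1 ^ n ≤ 1 + A + B ^ n := by
  rcases le_total B 1 with h | h
  · rw [max_eq_right h, one_pow]
    linarith [pow_nonneg hB n]
  · rw [max_eq_left h]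
    linarith

lemma one_add_add_pow_le (hB : 0 ≤ B) (n : ℕ) : 1 + A + B ^ n ≤ 3 * (max A 1 * max B 1 ^ n) := by
  have hA1 : 1 ≤ max A 1 := le_max_right A 1
  have hB1 : 1 ≤ max B 1 ^ n := one_le_pow₀ (le_max_right B 1)
  have hAn : A ≤ max A 1 * max B 1 ^ n :=
    (le_max_left A 1).trans (le_mul_of_one_le_right (by positivity) hB1)
  have hBn : B ^ n ≤ max A 1 * max B 1 ^ n :=
    (pow_le_pow_left₀ hB (le_max_left B 1) n).trans (le_mul_of_one_le_left (by positivity) hA1)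
  nlinarith

lemma abs_inv_mul_log_one_add_add_pow_sub_logPlus_le (hA : 0 ≤ A) (hB : 0 ≤ B) {n : ℕ}
    (hn : 0 < n) :
    |(n : ℝ)⁻¹ * Real.log (1 + A + B ^ n) - logPlus B| ≤ (n : ℝ)⁻¹ * Real.log (3 * max A 1) := by
  have hn' : (0 : ℝ) < n := Nat.cast_pos.mpr hn
  have hT : 0 < max B 1 := lt_max_of_lt_right one_pos
  have hlow : n * Real.log (max B 1) ≤ Real.log (1 + A + B ^ n) := by
    rw [← Real.log_pow]
    exact Real.log_le_log (by positivity) (max_one_pow_le_one_add_add_pow hA hB n)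
  have hup : Real.log (1 + A + B ^ n) ≤ Real.log (3 * max A 1) + n * Real.log (max B 1) := by
    rw [← Real.log_pow, ← Real.log_mul (by positivity) (by positivity), mul_assoc]
    exact Real.log_le_log (by positivity) (one_add_add_pow_le hB n)
  rw [logPlus_eq_log_max_one hB, abs_le]
  constructor
  · have herr_nonneg : 0 ≤ (n : ℝ)⁻¹ * Real.log (3 * max A 1) :=
      mul_nonneg (by positivity) (Real.log_nonneg (by linarith [le_max_right A 1]))
    have hlow' : Real.log (max B 1) ≤ (n : ℝ)⁻¹ * Real.log (1 + A + B ^ n) := by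
      rwa [le_inv_mul_iff₀ hn']
    linarith
  · have hup' := mul_le_mul_of_nonneg_left hup (inv_nonneg.mpr hn'.le)
    rw [mul_add, inv_mul_cancel_left₀ hn'.ne'] at hup'
    linarith

end Estimates

lemma tendsto_inv_three_pow_mul_log_three_mul_pow {M : ℝ} (hM : 0 < M) :
    Tendsto (fun k : ℕ => ((3 : ℝ) ^ k)⁻¹ * Real.log (3 * M ^ (2 * 2 ^ k))) atTop (𝓝 0) := by
  have h3 := tendsto_pow_atTop_nhds_zero_of_lt_one (r := (3 : ℝ)⁻¹) (by norm_num) (by norm_num)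
  have h23 := tendsto_pow_atTop_nhds_zero_of_lt_one (r := (2 : ℝ) / 3) (by norm_num) (by norm_num)
  have hsum := (h3.mul_const (Real.log 3)).add ((h23.mul_const (2 * Real.log M)))
  rw [zero_mul, zero_mul, add_zero] at hsum
  refine hsum.congr fun k => ?_
  rw [Real.log_mul (by norm_num) (by positivity), Real.log_pow, div_pow, inv_pow]
  push_cast
  field_simp

/-- For `P(z,w) = (z², w³)`, the functions
`f_k(z,w) = 3^{-k} · log(1 + |z|^{2·2^k} + |w|^{2·3^k})` converge to
`G(z,w) = log⁺ |w|²` uniformly on every compact subset of `ℂ²`. -/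
theorem stmt6 :
    ∀ K : Set (ℂ × ℂ), IsCompact K →
      TendstoUniformlyOn
        (fun (k : ℕ) (p : ℂ × ℂ) =>
          ((3 : ℝ) ^ k)⁻¹ *
            Real.log (1 + ‖p.1‖ ^ (2 * 2 ^ k) + ‖p.2‖ ^ (2 * 3 ^ k)))
        (fun p : ℂ × ℂ => logPlus (‖p.2‖ ^ 2))
        Filter.atTop K := by
  intro K hK
  obtain ⟨R, hR⟩ := hK.isBounded.subset_closedBall 0
  have hM : 0 < max R 1 := lt_max_of_lt_right one_pos
  refine tendstoUniformlyOn_of_dist_le (tendsto_inv_three_pow_mul_log_three_mul_pow hM)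
    fun k p hp => ?_
  have hp1 : ‖p.1‖ ≤ max R 1 :=
    (norm_fst_le p).trans ((mem_closedBall_zero_iff.mp (hR hp)).trans (le_max_left R 1))
  have hmax : max (‖p.1‖ ^ (2 * 2 ^ k)) 1 ≤ max R 1 ^ (2 * 2 ^ k) :=
    max_le (pow_le_pow_left₀ (norm_nonneg _) hp1 _) (one_le_pow₀ (le_max_right R 1))
  rw [Real.dist_eq, abs_sub_comm, pow_mul ‖p.2‖ 2]
  calc _ ≤ ((3 ^ k : ℕ) : ℝ)⁻¹ * Real.log (3 * max (‖p.1‖ ^ (2 * 2 ^ k)) 1) := by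
          exact_mod_cast abs_inv_mul_log_one_add_add_pow_sub_logPlus_le (by positivity)
            (sq_nonneg ‖p.2‖) (n := 3 ^ k) (by positivity)
    _ ≤ _ := by
          push_cast
          gcongr
end
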